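/- Let G be a well-totally-dominated graph with total domination number 2, and let G_de be the subgraph of G formed by all dominating edges (edges whose endpoints form a TDS of G). Then for every minimal vertex cover S of G_de there exists a vertex v in G with N(v) = S. -/
import Mathlib


def IsTDS {V : Type*} (G : SimpleGraph V) (S : Set V) : Prop :=
  ∀ v : V, ∃ u ∈ S, G.Adj v u

def IsMinTDS {V : Type*} (G : SimpleGraph V) (S : Set V) : Prop :=
  IsTDS G S ∧ ∀ T ⊂ S, ¬ IsTDS G T

/-- An edge whose endpoints form a total dominating set. -/
def DomEdge {V : Type*} (G : SimpleGraph V) (u v : V) : Prop :=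
  G.Adj u v ∧ IsTDS G {u, v}

/-- Every total dominating set of a finite graph contains a minimal one. -/
lemma exists_minTDS_subset {V : Type*} [Fintype V] (G : SimpleGraph V)
    (T : Set V) (hT : IsTDS G T) : ∃ M ⊆ T, IsMinTDS G M := by
  classical
  obtain ⟨M, ⟨hMT, hMtds⟩, hminM⟩ :=
    (wellFounded_lt (α := Set V)).has_min {T' | T' ⊆ T ∧ IsTDS G T'}
      ⟨T, Set.Subset.rfl, hT⟩
  refine ⟨M, hMT, hMtds, fun T' hT' hT'tds => ?_⟩
  exact hminM T' ⟨hT'.subset.trans hMT, hT'tds⟩ hT'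

/-- If all minimal TDSs have size 2, then every TDS contains a dominating edge. -/
lemma tds_contains_domEdge {V : Type*} [Fintype V] (G : SimpleGraph V)
    (hWTD2 : ∀ S : Set V, IsMinTDS G S → S.ncard = 2)
    (T : Set V) (hT : IsTDS G T) :
    ∃ u ∈ T, ∃ v ∈ T, DomEdge G u v := by
  obtain ⟨M, hMT, hM⟩ := exists_minTDS_subset G T hT
  obtain ⟨u, v, huv, rfl⟩ := Set.ncard_eq_two.mp (hWTD2 M hM)
  have hu : u ∈ ({u, v} : Set V) := by simp
  have hv : v ∈ ({u, v} : Set V) := by simp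
  obtain ⟨x, hx, hadj⟩ := hM.1 u
  have hxv : x = v := by
    rcases hx with h | h
    · exact absurd (h ▸ hadj) (G.irrefl)
    · exact h
  subst hxv
  exact ⟨u, hMT hu, x, hMT hv, hadj, hM.1⟩

/-- In a well-totally-dominated graph with total domination number 2, every minimal
vertex cover of the subgraph of dominating edges is the open neighborhood of some
vertex. -/
theorem stmt_5 {V : Type*} [Fintype V] (G : SimpleGraph V)
    (hiso : ∀ v : V, ∃ u, G.Adj v u)
    (hex : ∃ S : Set V, IsMinTDS G S)
    (hWTD2 : ∀ S : Set V, IsMinTDS G S → S.ncard = 2)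
    (S : Set V)
    (hvc : ∀ u v : V, DomEdge G u v → u ∈ S ∨ v ∈ S)
    (hmin : ∀ T ⊂ S, ¬ ∀ u v : V, DomEdge G u v → u ∈ T ∨ v ∈ T) :
    ∃ w : V, G.neighborSet w = S := by
  classical
  -- Step 1: there is a vertex w with N(w) ⊆ S
  have hwex : ∃ w : V, G.neighborSet w ⊆ S := by
    by_contra hw
    push_neg at hw
    have hT : IsTDS G Sᶜ := by
      intro v
      obtain ⟨x, hx1, hx2⟩ := Set.not_subset.mp (hw v)
      exact ⟨x, hx2, hx1⟩
    obtain ⟨u, hu, v, hv, hde⟩ := tds_contains_domEdge G hWTD2 Sᶜ hT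
    rcases hvc u v hde with h | h
    · exact hu h
    · exact hv h
  obtain ⟨w, hwS⟩ := hwex
  refine ⟨w, Set.Subset.antisymm hwS ?_⟩
  intro s hs
  -- Step 2: for each s ∈ S there is a dominating edge s-t with t ∉ S
  have hssub : S \ {s} ⊂ S := Set.sdiff_singleton_ssubset.mpr hs
  have := hmin (S \ {s}) hssub
  push_neg at this
  obtain ⟨u, v, hde, hu, hv⟩ := this
  have hne : u ≠ v := hde.1.ne
  -- one of u,v equals s, the other is outside S
  have key : ∃ t : V, t ∉ S ∧ DomEdge G s t := by
    rcases hvc u v hde with h | h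
    · have : u = s := by
        by_contra h'
        exact hu ⟨h, h'⟩
      subst this
      refine ⟨v, ?_, hde⟩
      intro hvS
      have : v = u := by
        by_contra h'
        exact hv ⟨hvS, h'⟩
      exact hne this.symm
    · have : v = s := by
        by_contra h'
        exact hv ⟨h, h'⟩
      subst this
      refine ⟨u, ?_, hde.1.symm, ?_⟩
      · intro huS
        have : u = v := by
          by_contra h'
          exact hu ⟨huS, h'⟩
        exact hne this
      · intro z
        obtain ⟨x, hx, hadj⟩ := hde.2 z
        refine ⟨x, ?_, hadj⟩
        rcases hx with h | h
        · right; exact h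
        · left; exact h
  obtain ⟨t, htS, hadjst, htds⟩ := key
  -- {s, t} is a TDS, so w is adjacent to s or t; t ∉ S rules out t
  obtain ⟨x, hx, hadj⟩ := htds w
  rcases hx with h | h
  · subst h; exact hadj
  · subst h
    exact absurd (hwS hadj) htS
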